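/- arXiv:1801.10107 — 2 statements merged into one kernel-verified Lean document; each statement's English description precedes it below -/
import Mathlib

section
/- The isomorphism relation on countable graphs SPB reduces to the isomorphism relation on countable semigroups: there exists a Borel map f : X_Gr → X_Smg such that for all g, g' ∈ X_Gr, g ≅_Gr g' if and only if f g ≅_Smg f g', and for every g ∈ X_Gr the groups Aut(g) and Aut(f g) are isomorphic. -/
/-- Codes for countable graphs on domain `ℕ`: the edge relation as a function `ℕ → ℕ → Bool`. -/
abbrev GCode : Type := ℕ → ℕ → Bool

/-- `g` codes a graph: symmetric and irreflexive. -/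
def GCode.IsGraph (g : GCode) : Prop := (∀ m n, g m n = g n m) ∧ ∀ n, g n n = false

/-- `X_Gr`: the standard Borel space of (codes of) countable graphs. -/
def XGr : Set GCode := {g | g.IsGraph}

/-- Isomorphism of graph codes: a permutation of `ℕ` respecting the edge relations. -/
def GCode.Iso (g g' : GCode) : Prop := ∃ σ : Equiv.Perm ℕ, ∀ m n, g m n = g' (σ m) (σ n)

/-- Embeddability of graph codes: an injection of `ℕ` respecting the edge relations. -/
def GCode.Emb (g g' : GCode) : Prop :=
  ∃ h : ℕ → ℕ, Function.Injective h ∧ ∀ m n, g m n = g' (h m) (h n)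

/-- The automorphism group of a graph code: permutations of `ℕ` preserving the edge
relation. -/
def GCode.Aut (g : GCode) : Subgroup (Equiv.Perm ℕ) where
  carrier := {σ : Equiv.Perm ℕ | ∀ m n, g m n = g (σ m) (σ n)}
  one_mem' := fun _ _ => rfl
  mul_mem' := by
    intro σ τ hσ hτ m n
    simpa [Equiv.Perm.mul_apply] using (hτ m n).trans (hσ (τ m) (τ n))
  inv_mem' := by
    intro σ hσ m n
    have := hσ (σ⁻¹ m) (σ⁻¹ n)
    simpa [Equiv.Perm.inv_def, Equiv.apply_symm_apply] using this.symm

/-- Codes for countable semigroups on domain `ℕ`: a binary operation `ℕ → ℕ → ℕ`. -/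
abbrev SmgCode : Type := ℕ → ℕ → ℕ

/-- `m` codes a semigroup: the operation is associative. -/
def SmgCode.IsSmg (m : SmgCode) : Prop := ∀ a b c, m (m a b) c = m a (m b c)

/-- `X_Smg`: the standard Borel space of (codes of) countable semigroups. -/
def XSmg : Set SmgCode := {m | m.IsSmg}

/-- Isomorphism of semigroup codes. -/
def SmgCode.Iso (m m' : SmgCode) : Prop :=
  ∃ σ : Equiv.Perm ℕ, ∀ a b, σ (m a b) = m' (σ a) (σ b)

/-- The automorphism group of a semigroup code. -/
def SmgCode.Aut (m : SmgCode) : Subgroup (Equiv.Perm ℕ) where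
  carrier := {σ : Equiv.Perm ℕ | ∀ a b, σ (m a b) = m (σ a) (σ b)}
  one_mem' := fun _ _ => rfl
  mul_mem' := by
    intro σ τ hσ hτ a b
    simp only [Equiv.Perm.mul_apply]
    rw [hτ, hσ]
  inv_mem' := by
    intro σ hσ a b
    apply σ.injective
    rw [Equiv.Perm.inv_def, Equiv.apply_symm_apply, hσ, Equiv.apply_symm_apply, Equiv.apply_symm_apply]

/-!
Vertex `n` of a graph becomes the element `n + 2` of a semigroup in which `0` and `1` play the
roles of "false" and "true": the product of two vertices is `1` if they are equal or adjacent,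
and every other product is `0`. All triple products vanish, so the operation is associative.
An isomorphism of such semigroups fixes `0 = 0 * 0` and `1 = 2 * 2`, because both are products and
products take only these two values; hence it permutes the vertices, and for distinct vertices the
product records adjacency. So semigroup isomorphisms are exactly the shifted graph isomorphisms,
and the shift is a group isomorphism between automorphism groups.
-/

open Equiv

theorem Equiv.Perm.exists_extendDomain_eq {α β : Type*} {p : β → Prop} [DecidablePred p]
    (f : α ≃ Subtype p) {σ : Perm β} (hσ : ∀ b, ¬ p b → σ b = b) :
    ∃ e : Perm α, e.extendDomain f = σ := by
  have hp : ∀ b, p (σ b) ↔ p b := fun b => by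
    refine ⟨fun h => ?_, fun h => ?_⟩
    · by_contra hb
      rw [hσ b hb] at h
      exact hb h
    · by_contra hb
      have hfix : σ b = b := σ.injective (hσ (σ b) hb)
      rw [hfix] at hb
      exact hb h
  refine ⟨f.permCongr.symm (σ.subtypePerm hp), Equiv.ext fun b => ?_⟩
  by_cases hb : p b
  · simp [Perm.extendDomain_apply_subtype _ _ hb, permCongr_apply]
  · rw [Perm.extendDomain_apply_not_subtype _ _ hb, hσ b hb]

namespace GCode

variable {g g' : GCode}

def vertexEquiv : ℕ ≃ {a : ℕ // 2 ≤ a} where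
  toFun n := ⟨n + 2, by omega⟩
  invFun a := a.1 - 2
  left_inv n := by simp
  right_inv a := Subtype.ext (Nat.sub_add_cancel a.2)

@[simp]
theorem extendDomain_vertexEquiv_add_two (τ : Perm ℕ) (n : ℕ) :
    τ.extendDomain vertexEquiv (n + 2) = τ n + 2 :=
  (τ.extendDomain_apply_image vertexEquiv n :)

theorem extendDomain_vertexEquiv_of_lt_two (τ : Perm ℕ) {a : ℕ} (ha : a < 2) :
    τ.extendDomain vertexEquiv a = a :=
  τ.extendDomain_apply_not_subtype vertexEquiv (by omega)

def toSmg (g : GCode) : SmgCode := fun a b =>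
  if 2 ≤ a ∧ 2 ≤ b ∧ (a = b ∨ g (a - 2) (b - 2)) then 1 else 0

theorem toSmg_lt_two (g : GCode) (a b : ℕ) : g.toSmg a b < 2 := by
  unfold toSmg; split <;> omega

theorem toSmg_of_lt_two_left (g : GCode) {a : ℕ} (ha : a < 2) (b : ℕ) : g.toSmg a b = 0 :=
  if_neg fun h => by omega

theorem toSmg_of_lt_two_right (g : GCode) (a : ℕ) {b : ℕ} (hb : b < 2) : g.toSmg a b = 0 :=
  if_neg fun h => by omega

theorem toSmg_add_two (g : GCode) (m n : ℕ) :
    g.toSmg (m + 2) (n + 2) = if m = n ∨ g m n then 1 else 0 := by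
  simp [toSmg]

theorem toSmg_self (g : GCode) {a : ℕ} (ha : 2 ≤ a) : g.toSmg a a = 1 :=
  if_pos ⟨ha, ha, Or.inl rfl⟩

theorem isSmg_toSmg (g : GCode) : g.toSmg.IsSmg := fun a b c => by
  rw [toSmg_of_lt_two_left g (toSmg_lt_two g a b), toSmg_of_lt_two_right g a (toSmg_lt_two g b c)]

theorem measurable_toSmg : Measurable toSmg :=
  measurable_pi_lambda _ fun _ => measurable_pi_lambda _ fun _ =>
    Measurable.ite (measurableSet_setOfPred.2 (by fun_prop)) measurable_const measurable_const

theorem toSmg_extendDomain {τ : Perm ℕ} (hτ : ∀ m n, g m n = g' (τ m) (τ n)) (a b : ℕ) :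
    τ.extendDomain vertexEquiv (g.toSmg a b) =
      g'.toSmg (τ.extendDomain vertexEquiv a) (τ.extendDomain vertexEquiv b) := by
  rw [extendDomain_vertexEquiv_of_lt_two τ (toSmg_lt_two g a b)]
  rcases lt_or_ge a 2 with ha | ha
  · rw [extendDomain_vertexEquiv_of_lt_two τ ha, toSmg_of_lt_two_left g ha,
      toSmg_of_lt_two_left g' ha]
  rcases lt_or_ge b 2 with hb | hb
  · rw [extendDomain_vertexEquiv_of_lt_two τ hb, toSmg_of_lt_two_right g _ hb,
      toSmg_of_lt_two_right g' _ hb]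
  obtain ⟨m, rfl⟩ := Nat.exists_eq_add_of_le' ha
  obtain ⟨n, rfl⟩ := Nat.exists_eq_add_of_le' hb
  simp only [extendDomain_vertexEquiv_add_two, toSmg_add_two, τ.injective.eq_iff, hτ]

theorem eq_self_of_lt_two_of_toSmg {σ : Perm ℕ}
    (hσ : ∀ a b, σ (g.toSmg a b) = g'.toSmg (σ a) (σ b)) {a : ℕ} (ha : a < 2) : σ a = a := by
  have h0 : σ 0 = g'.toSmg (σ 0) (σ 0) := by
    rw [← hσ, toSmg_of_lt_two_left g two_pos]
  have h1 : σ 1 = g'.toSmg (σ 2) (σ 2) := by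
    rw [← hσ, toSmg_self g le_rfl]
  have h0_lt := toSmg_lt_two g' (σ 0) (σ 0)
  have h1_lt := toSmg_lt_two g' (σ 2) (σ 2)
  have h01 : σ 0 ≠ σ 1 := σ.injective.ne (by decide)
  have h02 : σ 0 ≠ σ 2 := σ.injective.ne (by decide)
  have h12 : σ 1 ≠ σ 2 := σ.injective.ne (by decide)
  have h2 : 2 ≤ σ 2 := by omega
  rw [toSmg_self g' h2] at h1
  interval_cases a <;> omega

theorem iso_of_toSmg_extendDomain (hg : ∀ n, g n n = false) (hg' : ∀ n, g' n n = false)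
    {τ : Perm ℕ} (hτ : ∀ a b, τ.extendDomain vertexEquiv (g.toSmg a b) =
      g'.toSmg (τ.extendDomain vertexEquiv a) (τ.extendDomain vertexEquiv b)) (m n : ℕ) :
    g m n = g' (τ m) (τ n) := by
  rcases eq_or_ne m n with rfl | hmn
  · rw [hg, hg']
  have h := hτ (m + 2) (n + 2)
  rw [extendDomain_vertexEquiv_of_lt_two τ (toSmg_lt_two g _ _)] at h
  simp only [extendDomain_vertexEquiv_add_two, toSmg_add_two, τ.injective.eq_iff, hmn,
    false_or] at h
  revert h
  cases g m n <;> cases g' (τ m) (τ n) <;> simp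

theorem exists_iso_extendDomain_eq_of_toSmg (hg : ∀ n, g n n = false)
    (hg' : ∀ n, g' n n = false) {σ : Perm ℕ}
    (hσ : ∀ a b, σ (g.toSmg a b) = g'.toSmg (σ a) (σ b)) :
    ∃ τ : Perm ℕ, (∀ m n, g m n = g' (τ m) (τ n)) ∧ τ.extendDomain vertexEquiv = σ := by
  obtain ⟨τ, rfl⟩ := σ.exists_extendDomain_eq vertexEquiv fun a ha =>
    eq_self_of_lt_two_of_toSmg hσ (by omega)
  exact ⟨τ, iso_of_toSmg_extendDomain hg hg' hσ, rfl⟩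

theorem iso_iff_iso_toSmg (hg : ∀ n, g n n = false) (hg' : ∀ n, g' n n = false) :
    g.Iso g' ↔ g.toSmg.Iso g'.toSmg := by
  constructor
  · rintro ⟨τ, hτ⟩
    exact ⟨τ.extendDomain vertexEquiv, toSmg_extendDomain hτ⟩
  · rintro ⟨σ, hσ⟩
    obtain ⟨τ, hτ, -⟩ := exists_iso_extendDomain_eq_of_toSmg hg hg' hσ
    exact ⟨τ, hτ⟩

noncomputable def autEquivAutToSmg (hg : ∀ n, g n n = false) : g.Aut ≃* g.toSmg.Aut :=
  MulEquiv.ofBijective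
    (((Perm.extendDomainHom vertexEquiv).comp g.Aut.subtype).codRestrict g.toSmg.Aut
      fun τ => toSmg_extendDomain τ.2)
    ⟨fun τ τ' h => Subtype.val_injective
      (Perm.extendDomainHom_injective vertexEquiv (congrArg Subtype.val h)),
    fun ⟨σ, hσ⟩ => by
      obtain ⟨τ, hτ, rfl⟩ := exists_iso_extendDomain_eq_of_toSmg hg hg hσ
      exact ⟨⟨τ, hτ⟩, rfl⟩⟩

end GCode

/-- **The isomorphism relation on countable graphs SPB reduces to the isomorphism relation on
countable semigroups**: a Borel reduction which moreover preserves automorphism groups. -/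
theorem graphs_spb_reduces_to_semigroups
    : ∃ f : {g : GCode // g ∈ XGr} → SmgCode, Measurable f ∧
      (∀ g, f g ∈ XSmg) ∧
      (∀ g g', GCode.Iso g.1 g'.1 ↔ SmgCode.Iso (f g) (f g')) ∧
      (∀ g, Nonempty (GCode.Aut g.1 ≃* SmgCode.Aut (f g))) :=
  ⟨fun g => g.1.toSmg, GCode.measurable_toSmg.comp measurable_subtype_coe,
    fun g => g.1.isSmg_toSmg, fun g g' => GCode.iso_iff_iso_toSmg g.2.2 g'.2.2,
    fun g => ⟨GCode.autEquivAutToSmg g.2.2⟩⟩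
end

section
/- The isomorphism relation on countable graphs does not SPB reduce to the isomorphism relation on countable groups: there is no Borel map f : X_Gr → X_Gp such that for all g, g' ∈ X_Gr, g ≅_Gr g' if and only if f g ≅_Gp f g', and for every g ∈ X_Gr the groups Aut(g) and Aut(f g) are isomorphic. -/
/-- Codes for countable groups on domain `ℕ`: a binary operation `ℕ → ℕ → ℕ` which is
associative, has an identity, and has inverses. -/
abbrev GpCode : Type := ℕ → ℕ → ℕ

/-- `m` codes a group structure on `ℕ`. -/
def GpCode.IsGp (m : GpCode) : Prop :=
  (∀ a b c, m (m a b) c = m a (m b c)) ∧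
  ∃ e, (∀ a, m e a = a ∧ m a e = a) ∧ ∀ a, ∃ b, m a b = e ∧ m b a = e

/-- `X_Gp`: the standard Borel space of (codes of) countable groups. -/
def XGp : Set GpCode := {m | m.IsGp}

/-- Isomorphism of group codes. -/
def GpCode.Iso (m m' : GpCode) : Prop :=
  ∃ σ : Equiv.Perm ℕ, ∀ a b, σ (m a b) = m' (σ a) (σ b)

/-- The automorphism group of a group code. -/
def GpCode.Aut (m : GpCode) : Subgroup (Equiv.Perm ℕ) where
  carrier := {σ : Equiv.Perm ℕ | ∀ a b, σ (m a b) = m (σ a) (σ b)}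
  one_mem' := fun _ _ => rfl
  mul_mem' := by
    intro σ τ hσ hτ a b
    simp only [Equiv.Perm.mul_apply]
    rw [hτ, hσ]
  inv_mem' := by
    intro σ hσ a b
    apply σ.injective
    rw [Equiv.Perm.inv_def, Equiv.apply_symm_apply, hσ, Equiv.apply_symm_apply, Equiv.apply_symm_apply]

/-!
A graph with trivial automorphism group, such as the one-way infinite path, would have to be
sent to a group code with trivial automorphism group. But every infinite group has a nontrivial
automorphism: an inner one if it is nonabelian, inversion if it is abelian but not of exponent
two, and otherwise it is an infinite vector space over `ZMod 2`, where two basis vectors can be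
swapped.
-/

theorem exists_linearEquiv_apply_ne_of_infinite (K V : Type*) [DivisionRing K] [Finite K]
    [AddCommGroup V] [Module K V] [Infinite V] : ∃ (e : V ≃ₗ[K] V) (v : V), e v ≠ v := by
  let B := Module.Basis.ofVectorSpace K V
  have : Infinite (Module.Basis.ofVectorSpaceIndex K V) := by
    by_contra hfin
    rw [not_infinite_iff_finite] at hfin
    have := Module.Finite.of_basis B
    have := Module.finite_of_finite K (M := V)
    exact not_finite V
  obtain ⟨i, j, hij⟩ := exists_pair_ne (Module.Basis.ofVectorSpaceIndex K V)
  classical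
  refine ⟨B.equiv B (Equiv.swap i j), B i, ?_⟩
  rw [Module.Basis.equiv_apply, Equiv.swap_apply_left]
  exact B.injective.ne hij.symm

theorem CommGroup.exists_mulEquiv_apply_ne_of_forall_inv_eq (G : Type*) [CommGroup G]
    [Infinite G] (hG : ∀ x : G, x⁻¹ = x) : ∃ (e : G ≃* G) (x : G), e x ≠ x := by
  let : Module (ZMod 2) (Additive G) := AddCommGroup.zmodModule fun x => by
    rw [two_nsmul, ← neg_eq_iff_add_eq_zero]
    exact hG x.toMul
  obtain ⟨e, v, hv⟩ := exists_linearEquiv_apply_ne_of_infinite (ZMod 2) (Additive G)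
  exact ⟨AddEquiv.toMultiplicative e.toAddEquiv, v.toMul, hv⟩

theorem exists_mulEquiv_apply_ne_of_infinite (G : Type*) [Group G] [Infinite G] :
    ∃ (e : G ≃* G) (x : G), e x ≠ x := by
  by_cases hcomm : ∀ x y : G, x * y = y * x
  · let : CommGroup G := { ‹Group G› with mul_comm := hcomm }
    by_cases hinv : ∀ x : G, x⁻¹ = x
    · exact CommGroup.exists_mulEquiv_apply_ne_of_forall_inv_eq G hinv
    · push Not at hinv
      obtain ⟨x, hx⟩ := hinv
      exact ⟨MulEquiv.inv G, x, hx⟩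
  · push Not at hcomm
    obtain ⟨x, y, hxy⟩ := hcomm
    refine ⟨MulAut.conj x, y, fun h => hxy ?_⟩
    rw [MulAut.conj_apply, mul_inv_eq_iff_eq_mul] at h
    exact h

/-- `ℕ` with the multiplication coded by `m`; a type synonym, so that `ℕ`'s own `*` does not
interfere. -/
def GpCode.Carrier (_m : GpCode) : Type := ℕ

instance (m : GpCode) : Mul m.Carrier := ⟨m⟩

instance (m : GpCode) : Infinite m.Carrier := inferInstanceAs (Infinite ℕ)

noncomputable abbrev GpCode.IsGp.group {m : GpCode} (hm : m.IsGp) : Group m.Carrier :=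
  letI : One m.Carrier := ⟨hm.2.choose⟩
  letI : Inv m.Carrier := ⟨fun a => (hm.2.choose_spec.2 a).choose⟩
  Group.ofLeftAxioms hm.1 (fun a => (hm.2.choose_spec.1 a).1)
    (fun a => (hm.2.choose_spec.2 a).choose_spec.2)

theorem GpCode.toPerm_mem_aut {m : GpCode} (e : m.Carrier ≃* m.Carrier) :
    (e.toEquiv : Equiv.Perm ℕ) ∈ GpCode.Aut m :=
  fun a b => MulEquiv.map_mul e a b

theorem GpCode.IsGp.aut_ne_bot {m : GpCode} (hm : m.IsGp) : GpCode.Aut m ≠ ⊥ := by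
  let := hm.group
  obtain ⟨e, x, hx⟩ := exists_mulEquiv_apply_ne_of_infinite m.Carrier
  intro hbot
  have he : (e.toEquiv : Equiv.Perm ℕ) = 1 :=
    Subgroup.mem_bot.1 (hbot ▸ GpCode.toPerm_mem_aut e)
  exact hx (Equiv.congr_fun he x)

def GCode.ray : GCode := fun m n => decide (m + 1 = n ∨ n + 1 = m)

theorem GCode.ray_eq_true {m n : ℕ} : ray m n = true ↔ m + 1 = n ∨ n + 1 = m :=
  decide_eq_true_iff

theorem GCode.ray_mem_XGr : ray ∈ XGr :=
  ⟨fun _ _ => decide_eq_decide.mpr or_comm, fun _ => by simp [ray]⟩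

theorem GCode.aut_ray_eq_bot : GCode.Aut ray = ⊥ := by
  refine (Subgroup.eq_bot_iff_forall _).2 fun σ hσ => ?_
  have adj : ∀ m n, (m + 1 = n ∨ n + 1 = m) ↔ (σ m + 1 = σ n ∨ σ n + 1 = σ m) := by
    intro m n
    rw [← ray_eq_true, ← ray_eq_true, hσ m n]
  have h0 : σ 0 = 0 := by
    by_contra h
    obtain ⟨k, hk⟩ := Nat.exists_eq_succ_of_ne_zero h
    -- `σ 0` has the two neighbours `k` and `k + 2`, but `0` has only the neighbour `1`
    have hk₁ : σ.symm k = 1 := by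
      have := (adj (σ.symm k) 0).2 (by simp [hk])
      omega
    have hk₂ : σ.symm (k + 2) = 1 := by
      have := (adj (σ.symm (k + 2)) 0).2 (by simp [hk])
      omega
    have := σ.symm.injective (hk₁.trans hk₂.symm)
    omega
  have hfix : ∀ n, σ n = n ∧ σ (n + 1) = n + 1 := by
    intro n
    induction n with
    | zero =>
      have h1 := (adj 0 1).1 (by omega)
      exact ⟨h0, show σ 1 = 1 by omega⟩
    | succ n ih =>
      have hnext := (adj (n + 1) (n + 2)).1 (by omega)
      have hne : σ (n + 2) ≠ σ n := σ.injective.ne (by omega)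
      exact ⟨ih.2, show σ (n + 2) = n + 2 by omega⟩
  ext n
  exact (hfix n).1

/-- **The isomorphism relation on countable graphs does not SPB reduce to the isomorphism
relation on countable groups**: there is no Borel reduction of graph isomorphism to group
isomorphism which preserves automorphism groups. -/
theorem graphs_not_spb_reducible_to_groups
    : ¬ ∃ f : {g : GCode // g ∈ XGr} → GpCode, Measurable f ∧
      (∀ g, f g ∈ XGp) ∧
      (∀ g g', GCode.Iso g.1 g'.1 ↔ GpCode.Iso (f g) (f g')) ∧
      (∀ g, Nonempty (GCode.Aut g.1 ≃* GpCode.Aut (f g))) := by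
  rintro ⟨f, -, hf_gp, -, hf_aut⟩
  let ray : {g : GCode // g ∈ XGr} := ⟨GCode.ray, GCode.ray_mem_XGr⟩
  obtain ⟨φ⟩ := hf_aut ray
  have := (Subgroup.nontrivial_iff_ne_bot _).2 (hf_gp ray).aut_ne_bot
  exact (Subgroup.nontrivial_iff_ne_bot _).1 φ.toEquiv.nontrivial GCode.aut_ray_eq_bot
end
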